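/- Let η := ∑_{k=1}^∞ e^{−k} δ_{1/k} on (0,1], where δ_x denotes the Dirac measure at x. Then β_η(0) = 1/2 and β_η(s) = 0 for every s > 0; consequently, for every b > 0 one has s_b = 0 and β_η(0) ≠ b·s_b (Remark 2.5). -/

import Mathlib

/-!
Write `N = 2 ^ n - 1`. The atom `1 / (k + 1)` lies in the dyadic interval of generation `n`
with index `N / (k + 1)` (natural division), so the charged intervals are indexed by the values
of `k ↦ N / (k + 1)`. Every `j` with `j * j ≤ N` is such a value, while the values at
`k ≥ √N` are below `√N`; so there are between `2 ^ ⌊n/2⌋` and `3 * 2 ^ ⌊n/2⌋` of them, and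
`β_η(0) = 1/2`.

For `s > 0`: the interval with index `l` only carries atoms `k ≥ N / (l + 1)`, so its mass is
`O(e ^ (-N / (l + 1)))`, and `l ↦ N / (l + 1)` is injective on the indices because
`N / (N / (N / (k + 1) + 1) + 1) = N / (k + 1)`. Hence the moment sum lies between `e ^ (-s)`
(the atom at `1`) and a convergent geometric series, and `β_η(s) = 0`. Then `s_b = inf (0, ∞) = 0`
while `β_η(0) = 1/2`.
-/

open MeasureTheory Filter
open scoped ENNReal

noncomputable section

/-- The half-open dyadic interval `(l/2^n, (l+1)/2^n]`. -/
def dyadicInt (n : ℕ) (l : ℤ) : Set ℝ :=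
  Set.Ioc ((l : ℝ) / 2 ^ n) (((l : ℝ) + 1) / 2 ^ n)

/-- `β_n^η(s) = log (∑_{C ∈ 𝒟_n} η(C)^s) / log (2^n)`, the sum running over all
dyadic intervals of generation `n` with positive `η`-measure. -/
def betaN1 (η : Measure ℝ) (n : ℕ) (s : ℝ) : ℝ :=
  Real.log (∑' l : {l : ℤ // 0 < η (dyadicInt n l)},
      (η (dyadicInt n l.1)).toReal ^ s) / Real.log ((2 : ℝ) ^ n)

/-- The `L^q`-spectrum `β_η(s) = limsup_n β_n^η(s)`. -/
def lqSpectrum1 (η : Measure ℝ) (s : ℝ) : ℝ :=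
  limsup (fun n => betaN1 η n s) atTop

/-- `s_b = inf {s > 0 : β_η(s) - b·s ≤ 0}`. -/
def sb1 (η : Measure ℝ) (b : ℝ) : ℝ :=
  sInf {s : ℝ | 0 < s ∧ lqSpectrum1 η s - b * s ≤ 0}

/-- The measure `η = ∑_{k=1}^∞ e^{-k} δ_{1/k}` on `(0,1]`. -/
def etaMeasure : Measure ℝ :=
  Measure.sum fun k : ℕ =>
    ENNReal.ofReal (Real.exp (-((k : ℝ) + 1))) • Measure.dirac (1 / ((k : ℝ) + 1))

open Finset Topology

namespace Nat

theorem div_div_succ_le (N k : ℕ) : N / (N / (k + 1) + 1) ≤ k := by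
  rw [← Nat.lt_succ_iff, Nat.div_lt_iff_lt_mul (Nat.succ_pos _)]
  exact Nat.lt_mul_div_succ N (Nat.succ_pos k)

theorem div_succ_div_succ_div_succ (N k : ℕ) :
    N / (N / (N / (k + 1) + 1) + 1) = N / (k + 1) :=
  le_antisymm (div_div_succ_le N _)
    (Nat.div_le_div_left (Nat.succ_le_succ (div_div_succ_le N k)) (Nat.succ_pos _))

theorem div_succ_injOn_range (N : ℕ) :
    Set.InjOn (fun l => N / (l + 1)) (Set.range fun k => N / (k + 1)) := by
  rintro _ ⟨k, rfl⟩ _ ⟨k', rfl⟩ h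
  dsimp only at h ⊢
  rw [← div_succ_div_succ_div_succ N k, ← div_succ_div_succ_div_succ N k']
  exact congrArg (fun m => N / (m + 1)) h

theorem exists_div_succ_eq_of_mul_self_le {N j : ℕ} (h : j * j ≤ N) :
    ∃ k ≤ N, N / (k + 1) = j := by
  rcases Nat.eq_zero_or_pos j with rfl | hj
  · exact ⟨N, le_rfl, Nat.div_eq_of_lt (Nat.lt_succ_self N)⟩
  · have hjN : j ≤ N / j := (Nat.le_div_iff_mul_le hj).2 h
    have hq : 0 < N / j := hj.trans_le hjN
    refine ⟨N / j - 1, (Nat.sub_le _ _).trans (Nat.div_le_self _ _), ?_⟩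
    rw [Nat.sub_add_cancel hq]
    refine le_antisymm ?_ ((Nat.le_div_iff_mul_le hq).2 (Nat.mul_div_le N j))
    rw [← Nat.lt_succ_iff, Nat.div_lt_iff_lt_mul hq]
    have := Nat.mod_lt N hj
    have := Nat.div_add_mod N j
    nlinarith

theorem card_image_div_succ_le {N a b : ℕ} (h : N < a * b) (s : Finset ℕ) :
    #(s.image fun k => N / (k + 1)) ≤ a + b := by
  have ha : 0 < a := Nat.pos_of_ne_zero (by rintro rfl; simp at h)
  have hsub :
      s.image (fun k => N / (k + 1)) ⊆ (range a).image (fun k => N / (k + 1)) ∪ range b := by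
    intro l hl
    obtain ⟨k, -, rfl⟩ := mem_image.1 hl
    rcases lt_or_ge k a with hk | hk
    · exact mem_union_left _ (mem_image_of_mem _ (mem_range.2 hk))
    · refine mem_union_right _ (mem_range.2 ((Nat.div_le_div_left (by omega) ha).trans_lt ?_))
      rwa [Nat.div_lt_iff_lt_mul ha, mul_comm]
  calc _ ≤ _ := card_le_card hsub
    _ ≤ _ := card_union_le _ _
    _ ≤ a + b := by
      rw [card_range]
      exact Nat.add_le_add_right (Finset.card_image_le.trans (card_range a).le) b

end Nat

theorem measurableSet_dyadicInt (n : ℕ) (l : ℤ) : MeasurableSet (dyadicInt n l) :=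
  measurableSet_Ioc

theorem one_div_succ_mem_dyadicInt_iff (n k : ℕ) (l : ℤ) :
    1 / ((k : ℝ) + 1) ∈ dyadicInt n l ↔ l = ((2 ^ n - 1) / (k + 1) : ℕ) := by
  have hk : (0 : ℤ) < k + 1 := by positivity
  have hmem : 1 / ((k : ℝ) + 1) ∈ dyadicInt n l ↔
      l * (k + 1) < 2 ^ n ∧ 2 ^ n ≤ (l + 1) * (k + 1) := by
    rw [dyadicInt, Set.mem_Ioc, div_lt_div_iff₀ (by positivity) (by positivity),
      div_le_div_iff₀ (by positivity) (by positivity), one_mul]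
    norm_cast
  rw [hmem, Int.natCast_div, Nat.cast_sub Nat.one_le_two_pow]
  push_cast
  constructor
  · rintro ⟨h₁, h₂⟩
    refine le_antisymm ((Int.le_ediv_iff_mul_le hk).2 (by linarith)) ?_
    exact Int.lt_add_one_iff.1 ((Int.ediv_lt_iff_lt_mul hk).2 (by linarith))
  · rintro rfl
    have h₁ := Int.ediv_mul_le (2 ^ n - 1) hk.ne'
    have h₂ := Int.lt_ediv_add_one_mul_self (2 ^ n - 1) hk
    constructor <;> linarith

open Classical in
theorem etaMeasure_apply {A : Set ℝ} (hA : MeasurableSet A) :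
    etaMeasure A = ∑' k : ℕ,
      if 1 / ((k : ℝ) + 1) ∈ A then ENNReal.ofReal (Real.exp (-((k : ℝ) + 1))) else 0 := by
  simp [etaMeasure, Measure.sum_apply _ hA, Measure.dirac_apply' _ hA, Set.indicator_apply]

instance : IsFiniteMeasure etaMeasure := by
  have hsum : Summable fun k : ℕ => Real.exp (-((k : ℝ) + 1)) := by
    simpa using (summable_nat_add_iff 1).2 Real.summable_exp_neg_nat
  refine ⟨?_⟩
  rw [etaMeasure_apply MeasurableSet.univ]
  simp only [Set.mem_univ, if_true]
  rw [← ENNReal.ofReal_tsum_of_nonneg (fun _ => (Real.exp_pos _).le) hsum]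
  exact ENNReal.ofReal_lt_top

theorem le_etaMeasure {A : Set ℝ} (hA : MeasurableSet A) {k : ℕ} (hk : 1 / ((k : ℝ) + 1) ∈ A) :
    ENNReal.ofReal (Real.exp (-((k : ℝ) + 1))) ≤ etaMeasure A := by
  rw [etaMeasure_apply hA]
  exact le_of_eq_of_le (if_pos hk).symm (ENNReal.le_tsum k)

open Classical in
theorem etaMeasure_le_of_forall_le {A : Set ℝ} (hA : MeasurableSet A) (m : ℕ)
    (h : ∀ k : ℕ, 1 / ((k : ℝ) + 1) ∈ A → m ≤ k) :
    etaMeasure A ≤ ENNReal.ofReal (Real.exp (-m)) * etaMeasure Set.univ := by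
  set w : ℕ → ℝ≥0∞ := fun k => ENNReal.ofReal (Real.exp (-((k : ℝ) + 1)))
  have htail : ∑' k, (if m ≤ k then w k else 0) = ∑' j, w (j + m) := by
    rw [← (add_left_injective m).tsum_eq]
    · simp
    · intro k hk
      exact ⟨k - m, Nat.sub_add_cancel (not_lt.1 fun hkm => hk (if_neg (not_le.2 hkm)))⟩
  calc etaMeasure A = ∑' k : ℕ, if 1 / ((k : ℝ) + 1) ∈ A then w k else 0 := etaMeasure_apply hA
    _ ≤ ∑' k : ℕ, if m ≤ k then w k else 0 := ENNReal.tsum_le_tsum fun k => by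
      split_ifs with hA hm
      exacts [le_rfl, absurd (h k hA) hm, zero_le, le_rfl]
    _ = ∑' j, ENNReal.ofReal (Real.exp (-m)) * w j := by
      rw [htail]
      congr 1; funext j
      simp only [w]
      rw [← ENNReal.ofReal_mul (Real.exp_pos _).le, ← Real.exp_add]
      congr 2
      push_cast
      ring
    _ = _ := by
      rw [ENNReal.tsum_mul_left, etaMeasure_apply MeasurableSet.univ]
      simp [w]

theorem etaMeasure_dyadicInt_le (n l : ℕ) :
    etaMeasure (dyadicInt n l) ≤
      ENNReal.ofReal (Real.exp (-(((2 ^ n - 1) / (l + 1) : ℕ) : ℝ))) * etaMeasure Set.univ :=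
  etaMeasure_le_of_forall_le (measurableSet_dyadicInt n l) _ fun k hk => by
    rw [one_div_succ_mem_dyadicInt_iff, Nat.cast_inj] at hk
    exact hk ▸ Nat.div_div_succ_le _ k

def etaDyadicIndices (n : ℕ) : Finset ℕ :=
  (range (2 ^ n)).image fun k => (2 ^ n - 1) / (k + 1)

theorem mem_etaDyadicIndices {n l : ℕ} :
    l ∈ etaDyadicIndices n ↔ ∃ k : ℕ, (2 ^ n - 1) / (k + 1) = l := by
  refine ⟨fun h => by simpa using (mem_image.1 h).imp fun k hk => hk.2, ?_⟩
  rintro ⟨k, rfl⟩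
  refine mem_image.2 ⟨(2 ^ n - 1) / ((2 ^ n - 1) / (k + 1) + 1), mem_range.2 ?_,
    Nat.div_succ_div_succ_div_succ _ k⟩
  exact (Nat.div_le_self _ _).trans_lt (Nat.sub_lt Nat.one_le_two_pow one_pos)

theorem etaMeasure_dyadicInt_pos_iff (n : ℕ) (l : ℤ) :
    0 < etaMeasure (dyadicInt n l) ↔ l ∈ (etaDyadicIndices n).map Nat.castEmbedding := by
  rw [etaMeasure_apply (measurableSet_dyadicInt n l)]
  simp only [pos_iff_ne_zero, ne_eq, ENNReal.tsum_eq_zero, one_div_succ_mem_dyadicInt_iff]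
  simp [Real.exp_pos, mem_etaDyadicIndices, eq_comm]

theorem betaN1_eq_log_sum {η : Measure ℝ} {n : ℕ} (D : Finset ℤ)
    (hD : ∀ l, 0 < η (dyadicInt n l) ↔ l ∈ D) (s : ℝ) :
    betaN1 η n s = Real.log (∑ l ∈ D, (η (dyadicInt n l)).toReal ^ s) / Real.log (2 ^ n) := by
  rw [betaN1, ← (Equiv.subtypeEquivRight hD).symm.tsum_eq]
  congr 2
  exact Finset.tsum_subtype D fun l => (η (dyadicInt n l)).toReal ^ s

def etaMoment (n : ℕ) (s : ℝ) : ℝ :=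
  ∑ l ∈ etaDyadicIndices n, (etaMeasure (dyadicInt n l)).toReal ^ s

theorem betaN1_etaMeasure (n : ℕ) (s : ℝ) :
    betaN1 etaMeasure n s = Real.log (etaMoment n s) / Real.log (2 ^ n) := by
  rw [betaN1_eq_log_sum _ (etaMeasure_dyadicInt_pos_iff n), sum_map]
  rfl

theorem etaMoment_zero (n : ℕ) : etaMoment n 0 = #(etaDyadicIndices n) := by
  simp [etaMoment]

theorem two_pow_half_le_card_etaDyadicIndices (n : ℕ) : 2 ^ (n / 2) ≤ #(etaDyadicIndices n) := by
  suffices range (2 ^ (n / 2)) ⊆ etaDyadicIndices n by simpa using card_le_card this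
  intro j hj
  have hsq : j * j < 2 ^ n :=
    calc j * j < 2 ^ (n / 2) * 2 ^ (n / 2) := Nat.mul_self_lt_mul_self (mem_range.1 hj)
      _ ≤ 2 ^ n := by rw [← pow_add]; exact Nat.pow_le_pow_right two_pos (by omega)
  obtain ⟨k, -, hk⟩ := Nat.exists_div_succ_eq_of_mul_self_le (Nat.le_sub_one_of_lt hsq)
  exact mem_etaDyadicIndices.2 ⟨k, hk⟩

theorem card_etaDyadicIndices_le (n : ℕ) : #(etaDyadicIndices n) ≤ 3 * 2 ^ (n / 2) := by
  have h : 2 ^ n - 1 < 2 ^ (n / 2) * 2 ^ (n / 2 + 1) := by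
    rw [← pow_add]
    exact (Nat.sub_lt Nat.one_le_two_pow one_pos).trans_le
      (Nat.pow_le_pow_right two_pos (by omega))
  calc _ ≤ 2 ^ (n / 2) + 2 ^ (n / 2 + 1) := Nat.card_image_div_succ_le h _
    _ = 3 * 2 ^ (n / 2) := by ring

theorem exp_neg_le_etaMoment (n : ℕ) {s : ℝ} (hs : 0 ≤ s) : Real.exp (-s) ≤ etaMoment n s := by
  have hmem : 1 / ((0 : ℕ) + 1 : ℝ) ∈ dyadicInt n ((2 ^ n - 1) / (0 + 1) : ℕ) :=
    (one_div_succ_mem_dyadicInt_iff n 0 _).2 rfl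
  have hle := ENNReal.toReal_mono (measure_ne_top _ _)
    (le_etaMeasure (measurableSet_dyadicInt n _) hmem)
  rw [ENNReal.toReal_ofReal (Real.exp_pos _).le] at hle
  calc Real.exp (-s) = Real.exp (-(((0 : ℕ) : ℝ) + 1)) ^ s := by
        rw [← Real.exp_mul]; push_cast; ring_nf
    _ ≤ _ := Real.rpow_le_rpow (Real.exp_pos _).le hle hs
    _ ≤ etaMoment n s :=
      single_le_sum (f := fun l : ℕ => (etaMeasure (dyadicInt n l)).toReal ^ s)
        (fun l _ => Real.rpow_nonneg ENNReal.toReal_nonneg s) (mem_etaDyadicIndices.2 ⟨0, rfl⟩)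

theorem etaMoment_le (n : ℕ) {s : ℝ} (hs : 0 < s) :
    etaMoment n s ≤ (etaMeasure Set.univ).toReal ^ s * (1 - Real.exp (-s))⁻¹ := by
  set c := (etaMeasure Set.univ).toReal
  set f : ℕ → ℕ := fun l => (2 ^ n - 1) / (l + 1)
  have hterm : ∀ l : ℕ,
      (etaMeasure (dyadicInt n l)).toReal ^ s ≤ c ^ s * Real.exp (-s) ^ f l := by
    intro l
    have hle : (etaMeasure (dyadicInt n l)).toReal ≤ Real.exp (-(f l : ℝ)) * c := by
      have := ENNReal.toReal_mono (by finiteness) (etaMeasure_dyadicInt_le n l)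
      rwa [ENNReal.toReal_mul, ENNReal.toReal_ofReal (Real.exp_pos _).le] at this
    calc _ ≤ (Real.exp (-(f l : ℝ)) * c) ^ s :=
          Real.rpow_le_rpow ENNReal.toReal_nonneg hle hs.le
      _ = c ^ s * Real.exp (-s) ^ f l := by
        rw [Real.mul_rpow (Real.exp_pos _).le ENNReal.toReal_nonneg, ← Real.exp_mul,
          ← Real.exp_nat_mul, mul_comm, neg_mul, mul_neg]
  have hinj : Set.InjOn f (etaDyadicIndices n) :=
    (Nat.div_succ_injOn_range _).mono fun _ hl => mem_etaDyadicIndices.1 hl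
  have hr : Real.exp (-s) < 1 := Real.exp_lt_one_iff.2 (neg_neg_of_pos hs)
  calc etaMoment n s ≤ ∑ l ∈ etaDyadicIndices n, c ^ s * Real.exp (-s) ^ f l :=
        sum_le_sum fun l _ => hterm l
    _ = c ^ s * ∑ m ∈ (etaDyadicIndices n).image f, Real.exp (-s) ^ m := by
      rw [sum_image hinj, mul_sum]
    _ ≤ c ^ s * ∑' m : ℕ, Real.exp (-s) ^ m := by
      gcongr
      exact Summable.sum_le_tsum _ (fun m _ => by positivity)
        (summable_geometric_of_lt_one (by positivity) hr)
    _ = _ := by rw [tsum_geometric_of_lt_one (by positivity) hr]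

theorem tendsto_log_div_log_two_pow {x : ℕ → ℝ} {c a b : ℝ}
    (h : ∀ n : ℕ, Real.log (x n) - n * c ∈ Set.Icc a b) :
    Tendsto (fun n : ℕ => Real.log (x n) / Real.log (2 ^ n)) atTop (𝓝 (c / Real.log 2)) := by
  have herr : Tendsto (fun n : ℕ => (Real.log (x n) - n * c) / Real.log 2 / n) atTop (𝓝 0) :=
    tendsto_of_tendsto_of_tendsto_of_le_of_le
      (tendsto_const_div_atTop_nhds_zero_nat (a / Real.log 2))
      (tendsto_const_div_atTop_nhds_zero_nat (b / Real.log 2))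
      (fun n => by gcongr; exact (h n).1)
      (fun n => by gcongr; exact (h n).2)
  have := herr.const_add (c / Real.log 2)
  rw [add_zero] at this
  refine this.congr' ?_
  filter_upwards [eventually_ne_atTop 0] with n hn
  rw [Real.log_pow]
  field_simp
  ring

theorem lqSpectrum1_etaMeasure_eq {s c a b : ℝ}
    (h : ∀ n : ℕ, Real.log (etaMoment n s) - n * c ∈ Set.Icc a b) :
    lqSpectrum1 etaMeasure s = c / Real.log 2 := by
  simp only [lqSpectrum1, betaN1_etaMeasure]
  exact (tendsto_log_div_log_two_pow h).limsup_eq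

theorem lqSpectrum1_etaMeasure_zero : lqSpectrum1 etaMeasure 0 = 1 / 2 := by
  have hlog2 : 0 < Real.log 2 := Real.log_pos one_lt_two
  have hbound : ∀ n : ℕ, Real.log (etaMoment n 0) - n * (Real.log 2 / 2) ∈
      Set.Icc (-(Real.log 2 / 2)) (Real.log 3) := by
    intro n
    have hlow : (2 : ℝ) ^ (n / 2) ≤ etaMoment n 0 := by
      rw [etaMoment_zero]; exact_mod_cast two_pow_half_le_card_etaDyadicIndices n
    have hupp : etaMoment n 0 ≤ 3 * (2 : ℝ) ^ (n / 2) := by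
      rw [etaMoment_zero]; exact_mod_cast card_etaDyadicIndices_le n
    have hlog_low := Real.log_le_log (by positivity) hlow
    have hlog_upp := Real.log_le_log ((by positivity : (0 : ℝ) < 2 ^ (n / 2)).trans_le hlow) hupp
    rw [Real.log_mul (by norm_num) (by positivity)] at hlog_upp
    rw [Real.log_pow] at hlog_low hlog_upp
    have hhalf₁ : (n : ℝ) ≤ 2 * ((n / 2 : ℕ) : ℝ) + 1 := by
      exact_mod_cast (by omega : n ≤ 2 * (n / 2) + 1)
    have hhalf₂ : 2 * ((n / 2 : ℕ) : ℝ) ≤ n := by exact_mod_cast Nat.mul_div_le n 2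
    constructor <;> nlinarith
  rw [lqSpectrum1_etaMeasure_eq hbound]
  field_simp

theorem lqSpectrum1_etaMeasure_of_pos {s : ℝ} (hs : 0 < s) : lqSpectrum1 etaMeasure s = 0 := by
  have hbound : ∀ n : ℕ, Real.log (etaMoment n s) - n * 0 ∈
      Set.Icc (-s) (Real.log ((etaMeasure Set.univ).toReal ^ s * (1 - Real.exp (-s))⁻¹)) := by
    intro n
    have hpos := (Real.exp_pos _).trans_le (exp_neg_le_etaMoment n hs.le)
    rw [mul_zero, sub_zero]
    exact ⟨by simpa using Real.log_le_log (Real.exp_pos _) (exp_neg_le_etaMoment n hs.le),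
      Real.log_le_log hpos (etaMoment_le n hs)⟩
  rw [lqSpectrum1_etaMeasure_eq hbound, zero_div]

theorem sb1_eq_zero {η : Measure ℝ} {b : ℝ} (hb : 0 ≤ b)
    (h : ∀ s : ℝ, 0 < s → lqSpectrum1 η s = 0) : sb1 η b = 0 := by
  have hset : {s : ℝ | 0 < s ∧ lqSpectrum1 η s - b * s ≤ 0} = Set.Ioi 0 := by
    ext s
    refine ⟨And.left, fun hs => ⟨hs, ?_⟩⟩
    rw [h s hs, zero_sub, neg_nonpos]
    exact mul_nonneg hb (le_of_lt hs)
  rw [sb1, hset, csInf_Ioi]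

/-- **Remark 2.5**: for `η = ∑_k e^{-k} δ_{1/k}` one has `β_η(0) = 1/2` and
`β_η(s) = 0` for all `s > 0`; consequently `s_b = 0` and `β_η(0) ≠ b·s_b` for every
`b > 0`. -/
theorem statement6 :
    lqSpectrum1 etaMeasure 0 = 1 / 2 ∧
    (∀ s : ℝ, 0 < s → lqSpectrum1 etaMeasure s = 0) ∧
    ∀ b : ℝ, 0 < b →
      sb1 etaMeasure b = 0 ∧ lqSpectrum1 etaMeasure 0 ≠ b * sb1 etaMeasure b := by
  refine ⟨lqSpectrum1_etaMeasure_zero, fun s hs => lqSpectrum1_etaMeasure_of_pos hs,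
    fun b hb => ?_⟩
  have hsb : sb1 etaMeasure b = 0 :=
    sb1_eq_zero hb.le fun s hs => lqSpectrum1_etaMeasure_of_pos hs
  refine ⟨hsb, ?_⟩
  rw [lqSpectrum1_etaMeasure_zero, hsb, mul_zero]
  norm_num
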